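/- arXiv:bayes-an/9609001 — 2 statements merged into one kernel-verified Lean document; each statement's English description precedes it below -/
import Mathlib

section
/- Let B, C, D be random vectors (of dimensions m, p, n respectively) and let W be the Moore–Penrose inverse of Var(D). Then the adjusted covariance satisfies Cov_D(B,C) = Cov(B,C) − Cov(B,D)·W·Cov(D,C). -/
open MeasureTheory Matrix

variable {Ω : Type*}

/-- The covariance matrix of two random vectors `B` (dimension `m`) and `D` (dimension `n`):
the `(i,j)` entry is `E[Bᵢ·Dⱼ] − E[Bᵢ]·E[Dⱼ]`. -/
noncomputable def cov [MeasurableSpace Ω] (μ : Measure Ω) {m n : ℕ}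
    (B : Fin m → Ω → ℝ) (D : Fin n → Ω → ℝ) : Matrix (Fin m) (Fin n) ℝ :=
  Matrix.of fun i j =>
    (∫ ω, B i ω * D j ω ∂μ) - (∫ ω, B i ω ∂μ) * (∫ ω, D j ω ∂μ)

/-- `W` is a Moore–Penrose inverse of `V`. -/
def IsMoorePenrose {m n : ℕ} (V : Matrix (Fin m) (Fin n) ℝ)
    (W : Matrix (Fin n) (Fin m) ℝ) : Prop :=
  V * W * V = V ∧ W * V * W = W ∧ (V * W)ᵀ = V * W ∧ (W * V)ᵀ = W * V

/-- The adjusted expectation `E_D(B)` (computed with the matrix `W`, intended to be the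
Moore–Penrose inverse of `Var(D)`): the `i`-th component is
`E[Bᵢ] + Σ_j (Cov(B,D)·W)_{ij}·(Dⱼ − E[Dⱼ])`. -/
noncomputable def adjExp [MeasurableSpace Ω] (μ : Measure Ω) {m n : ℕ}
    (B : Fin m → Ω → ℝ) (D : Fin n → Ω → ℝ)
    (W : Matrix (Fin n) (Fin n) ℝ) : Fin m → Ω → ℝ :=
  fun i ω => (∫ ω', B i ω' ∂μ) + ∑ j, (cov μ B D * W) i j * (D j ω - ∫ ω', D j ω' ∂μ)

/-- The adjusted covariance `Cov_D(B,C) = Cov(B − E_D(B), C − E_D(C))`. -/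
noncomputable def adjCov [MeasurableSpace Ω] (μ : Measure Ω) {m p n : ℕ}
    (B : Fin m → Ω → ℝ) (C : Fin p → Ω → ℝ) (D : Fin n → Ω → ℝ)
    (W : Matrix (Fin n) (Fin n) ℝ) : Matrix (Fin m) (Fin p) ℝ :=
  cov μ (fun i ω => B i ω - adjExp μ B D W i ω) (fun j ω => C j ω - adjExp μ C D W j ω)

/-!
Entrywise, `cov μ` is Mathlib's `covariance`, which is bilinear and ignores additive constants.
So `Cov_D(B,C)` is the covariance of the residuals `B - P D` and `C - Q D`, where
`P = Cov(B,D) W` and `Q = Cov(C,D) W`, and bilinearity expands it to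
`Cov(B,C) - Cov(B,D) Qᵀ - P Cov(D,C) + P Var(D) Qᵀ`. The Moore–Penrose inverse of the symmetric
matrix `Var(D)` is symmetric by uniqueness, so `Qᵀ = W Cov(D,C)`, and `W Var(D) W = W` collapses
the three correction terms to one.
-/

namespace IsMoorePenrose

variable {m n : ℕ} {V : Matrix (Fin m) (Fin n) ℝ} {W W' : Matrix (Fin n) (Fin m) ℝ}

lemma transpose (h : IsMoorePenrose V W) : IsMoorePenrose Vᵀ Wᵀ := by
  obtain ⟨hVWV, hWVW, hVW, hWV⟩ := h
  refine ⟨?_, ?_, ?_, ?_⟩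
  · rw [← transpose_mul, ← transpose_mul, ← Matrix.mul_assoc, hVWV]
  · rw [← transpose_mul, ← transpose_mul, ← Matrix.mul_assoc, hWVW]
  · rw [← transpose_mul, transpose_transpose, hWV]
  · rw [← transpose_mul, transpose_transpose, hVW]

lemma eq_mul_mul (h : IsMoorePenrose V W) (h' : IsMoorePenrose V W') : W = W * V * W' := by
  obtain ⟨-, hWVW, hVW, -⟩ := h
  obtain ⟨hVW'V, -, hVW', -⟩ := h'
  calc W = W * (V * W)ᵀ := by rw [hVW, ← Matrix.mul_assoc, hWVW]
    _ = W * Wᵀ * (V * W' * V)ᵀ := by rw [hVW'V, transpose_mul, Matrix.mul_assoc]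
    _ = W * (V * W)ᵀ * (V * W')ᵀ := by simp only [transpose_mul, Matrix.mul_assoc]
    _ = W * V * W' := by rw [hVW, hVW', ← Matrix.mul_assoc, ← Matrix.mul_assoc W V W, hWVW]

lemma unique (h : IsMoorePenrose V W) (h' : IsMoorePenrose V W') : W = W' := by
  -- `eq_mul_mul` for the transposed pair gives `W' = W * V * W'` as well.
  have hW' : W'ᵀ = W'ᵀ * Vᵀ * Wᵀ := h'.transpose.eq_mul_mul h.transpose
  rw [← transpose_mul, ← transpose_mul, ← Matrix.mul_assoc, transpose_inj] at hW'
  rw [h.eq_mul_mul h', ← hW']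

lemma isSymm {V W : Matrix (Fin n) (Fin n) ℝ} (hV : V.IsSymm) (h : IsMoorePenrose V W) :
    W.IsSymm := by
  have hT := h.transpose
  rw [hV.eq] at hT
  exact hT.unique h

end IsMoorePenrose

section CovarianceMatrix

open ProbabilityTheory

variable [MeasurableSpace Ω] {μ : Measure Ω} {m n p : ℕ}

lemma cov_transpose (B : Fin m → Ω → ℝ) (D : Fin n → Ω → ℝ) : (cov μ B D)ᵀ = cov μ D B := by
  ext i j
  simp [cov, mul_comm]

lemma memLp_mulVec {X : Fin n → Ω → ℝ} (hX : ∀ k, MemLp (X k) 2 μ)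
    (A : Matrix (Fin m) (Fin n) ℝ) (i : Fin m) : MemLp (fun ω => ∑ k, A i k * X k ω) 2 μ :=
  memLp_finsetSum _ fun k _ => (hX k).const_mul _

lemma memLp_sub_mulVec {X : Fin m → Ω → ℝ} {Z : Fin n → Ω → ℝ} (hX : ∀ i, MemLp (X i) 2 μ)
    (hZ : ∀ k, MemLp (Z k) 2 μ) (A : Matrix (Fin m) (Fin n) ℝ) (i : Fin m) :
    MemLp (fun ω => X i ω - ∑ k, A i k * Z k ω) 2 μ :=
  (hX i).sub (memLp_mulVec hZ A i)

variable [IsProbabilityMeasure μ] {X : Fin m → Ω → ℝ} {Y : Fin n → Ω → ℝ} {Z : Fin p → Ω → ℝ}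

lemma cov_apply_eq_covariance (hX : ∀ i, MemLp (X i) 2 μ) (hY : ∀ j, MemLp (Y j) 2 μ)
    (i : Fin m) (j : Fin n) : cov μ X Y i j = covariance (X i) (Y j) μ :=
  (covariance_eq_sub (hX i) (hY j)).symm

lemma cov_sub_left {X' : Fin m → Ω → ℝ} (hX : ∀ i, MemLp (X i) 2 μ)
    (hX' : ∀ i, MemLp (X' i) 2 μ) (hY : ∀ j, MemLp (Y j) 2 μ) :
    cov μ (fun i ω => X i ω - X' i ω) Y = cov μ X Y - cov μ X' Y := by
  ext i j
  simp only [Matrix.sub_apply, cov_apply_eq_covariance (X := fun i ω => X i ω - X' i ω)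
    (fun i => (hX i).sub (hX' i)) hY,
    cov_apply_eq_covariance hX hY, cov_apply_eq_covariance hX' hY]
  exact covariance_fun_sub_left (hX i) (hX' i) (hY j)

lemma cov_sub_right {Y' : Fin n → Ω → ℝ} (hX : ∀ i, MemLp (X i) 2 μ)
    (hY : ∀ j, MemLp (Y j) 2 μ) (hY' : ∀ j, MemLp (Y' j) 2 μ) :
    cov μ X (fun j ω => Y j ω - Y' j ω) = cov μ X Y - cov μ X Y' := by
  rw [← cov_transpose, cov_sub_left hY hY' hX, transpose_sub, cov_transpose, cov_transpose]

lemma cov_mulVec_left (A : Matrix (Fin m) (Fin p) ℝ) (hZ : ∀ k, MemLp (Z k) 2 μ)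
    (hY : ∀ j, MemLp (Y j) 2 μ) :
    cov μ (fun i ω => ∑ k, A i k * Z k ω) Y = A * cov μ Z Y := by
  ext i j
  rw [cov_apply_eq_covariance (memLp_mulVec hZ A) hY, mul_apply,
    covariance_fun_sum_left (fun k => (hZ k).const_mul (A i k)) (hY j)]
  simp only [covariance_const_mul_left, cov_apply_eq_covariance hZ hY]

lemma cov_mulVec_right (A : Matrix (Fin n) (Fin p) ℝ) (hX : ∀ i, MemLp (X i) 2 μ)
    (hZ : ∀ k, MemLp (Z k) 2 μ) :
    cov μ X (fun j ω => ∑ k, A j k * Z k ω) = cov μ X Z * Aᵀ := by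
  rw [← cov_transpose, cov_mulVec_left A hZ hX, transpose_mul, cov_transpose]

lemma cov_sub_const_sub_const (c : Fin m → ℝ) (c' : Fin n → ℝ) (hX : ∀ i, MemLp (X i) 2 μ)
    (hY : ∀ j, MemLp (Y j) 2 μ) :
    cov μ (fun i ω => X i ω - c i) (fun j ω => Y j ω - c' j) = cov μ X Y := by
  ext i j
  rw [cov_apply_eq_covariance (X := fun i ω => X i ω - c i) (Y := fun j ω => Y j ω - c' j)
      (fun i => (hX i).sub (memLp_const _)) (fun j => (hY j).sub (memLp_const _)),
    cov_apply_eq_covariance hX hY,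
    covariance_sub_const_left ((hX i).integrable one_le_two),
    covariance_sub_const_right ((hY j).integrable one_le_two)]

lemma cov_sub_mulVec_sub_mulVec (A : Matrix (Fin m) (Fin p) ℝ) (A' : Matrix (Fin n) (Fin p) ℝ)
    (hX : ∀ i, MemLp (X i) 2 μ) (hY : ∀ j, MemLp (Y j) 2 μ) (hZ : ∀ k, MemLp (Z k) 2 μ) :
    cov μ (fun i ω => X i ω - ∑ k, A i k * Z k ω) (fun j ω => Y j ω - ∑ k, A' j k * Z k ω)
      = cov μ X Y - cov μ X Z * A'ᵀ - A * cov μ Z Y + A * cov μ Z Z * A'ᵀ := by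
  have hAZ := memLp_mulVec hZ A
  have hA'Z := memLp_mulVec hZ A'
  rw [cov_sub_left hX hAZ (memLp_sub_mulVec hY hZ A'), cov_sub_right hX hY hA'Z,
    cov_sub_right hAZ hY hA'Z, cov_mulVec_left A hZ hY, cov_mulVec_left A hZ hA'Z,
    cov_mulVec_right A' hX hZ, cov_mulVec_right A' hZ hZ, Matrix.mul_assoc]
  abel

lemma adjCov_eq_cov_sub_mulVec (B : Fin m → Ω → ℝ) (C : Fin p → Ω → ℝ) (D : Fin n → Ω → ℝ)
    (W : Matrix (Fin n) (Fin n) ℝ) (hB : ∀ i, MemLp (B i) 2 μ) (hC : ∀ j, MemLp (C j) 2 μ)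
    (hD : ∀ k, MemLp (D k) 2 μ) :
    adjCov μ B C D W = cov μ (fun i ω => B i ω - ∑ k, (cov μ B D * W) i k * D k ω)
      (fun j ω => C j ω - ∑ k, (cov μ C D * W) j k * D k ω) := by
  have sub_adjExp {q : ℕ} (E : Fin q → Ω → ℝ) : (fun i ω => E i ω - adjExp μ E D W i ω)
      = fun i ω => (E i ω - ∑ k, (cov μ E D * W) i k * D k ω)
        - (∫ ω', E i ω' ∂μ - ∑ k, (cov μ E D * W) i k * ∫ ω', D k ω' ∂μ) := by
    ext i ω
    simp only [adjExp, mul_sub, Finset.sum_sub_distrib]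
    ring
  rw [adjCov, sub_adjExp, sub_adjExp,
    cov_sub_const_sub_const _ _ (memLp_sub_mulVec hB hD _) (memLp_sub_mulVec hC hD _)]

end CovarianceMatrix

/-- `Cov_D(B,C) = Cov(B,C) − Cov(B,D)·W·Cov(D,C)` where `W` is the
Moore–Penrose inverse of `Var(D)`. -/
theorem adjCov_eq_cov_sub [MeasurableSpace Ω] (μ : Measure Ω) [IsProbabilityMeasure μ]
    {m p n : ℕ} (B : Fin m → Ω → ℝ) (C : Fin p → Ω → ℝ) (D : Fin n → Ω → ℝ)
    (hB : ∀ i, Measurable (B i) ∧ MemLp (B i) 2 μ)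
    (hC : ∀ i, Measurable (C i) ∧ MemLp (C i) 2 μ)
    (hD : ∀ i, Measurable (D i) ∧ MemLp (D i) 2 μ)
    (W : Matrix (Fin n) (Fin n) ℝ) (hW : IsMoorePenrose (cov μ D D) W) :
    adjCov μ B C D W = cov μ B C - cov μ B D * W * cov μ D C := by
  have hB₂ i := (hB i).2
  have hC₂ i := (hC i).2
  have hD₂ i := (hD i).2
  have hWVW : W * (cov μ D D * W) = W := by rw [← Matrix.mul_assoc, hW.2.1]
  rw [adjCov_eq_cov_sub_mulVec B C D W hB₂ hC₂ hD₂, cov_sub_mulVec_sub_mulVec _ _ hB₂ hC₂ hD₂,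
    transpose_mul, (hW.isSymm (cov_transpose D D)).eq, cov_transpose]
  simp only [Matrix.mul_assoc]
  rw [← Matrix.mul_assoc (cov μ D D), ← Matrix.mul_assoc W, hWVW]
  abel
end

section
/- Let B and D be random vectors of dimensions m and n, and W the Moore–Penrose inverse of Var(D). Then the adjusted expectation E_D(B) is the affine function of D closest to B in expected squared loss: for every real m×n matrix M and every a ∈ ℝ^m, Σ_i E[(B_i − (E_D(B))_i)²] ≤ Σ_i E[(B_i − a_i − Σ_j M_{ij}·D_j)²]. -/
open MeasureTheory Matrix

variable {Ω : Type*}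

/-!
Write `R = B − E_D(B)`. It has mean zero, and `Cov(R, D) = Cov(B, D) − Cov(B, D) W Var(D)`
vanishes because `Cov(B, D) W Var(D) = Cov(B, D)`: the kernel of `Var(D)` lies in that of
`Cov(B, D)`, and `W Var(D) − 1` maps into the kernel of `Var(D)` since `Var(D) W Var(D) = Var(D)`.
Any affine competitor differs from `E_D(B)` by an affine function `S` of `D`, so componentwise
`E[(R + S)²] = Var R + Var S + (E S)² ≥ E[R²]`.
-/

open ProbabilityTheory

section

variable [MeasurableSpace Ω] {μ : Measure Ω}

lemma cov_apply_eq_covariance_s12 [IsProbabilityMeasure μ] {m n : ℕ} {B : Fin m → Ω → ℝ}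
    {D : Fin n → Ω → ℝ} {i : Fin m} {j : Fin n} (hB : MemLp (B i) 2 μ) (hD : MemLp (D j) 2 μ) :
    cov μ B D i j = cov[B i, D j; μ] := by
  rw [covariance_eq_sub hB hD]
  rfl

lemma covariance_eq_zero_of_variance_eq_zero [IsFiniteMeasure μ] {X Y : Ω → ℝ}
    (hY : MemLp Y 2 μ) (hY0 : Var[Y; μ] = 0) : cov[X, Y; μ] = 0 := by
  refine integral_eq_zero_of_ae ?_
  filter_upwards [ae_eq_integral_of_variance_eq_zero hY hY0] with ω hω
  simp [hω]

lemma integral_sq_le_integral_add_sq [IsProbabilityMeasure μ] {R S : Ω → ℝ}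
    (hR : MemLp R 2 μ) (hS : MemLp S 2 μ) (hR0 : ∫ ω, R ω ∂μ = 0) (hRS : cov[R, S; μ] = 0) :
    ∫ ω, R ω ^ 2 ∂μ ≤ ∫ ω, (R ω + S ω) ^ 2 ∂μ := by
  have hvar := variance_add hR hS
  rw [variance_eq_sub hR, variance_eq_sub (hR.add hS), hR0, hRS] at hvar
  simp only [Pi.pow_apply, Pi.add_apply] at hvar
  nlinarith [variance_nonneg S μ]

section LinearCombination

variable {ι : Type*} [Fintype ι] {X : Ω → ℝ} {Y : ι → Ω → ℝ}

lemma memLp_const_add_sum_mul [IsFiniteMeasure μ] (hY : ∀ j, MemLp (Y j) 2 μ) (c : ℝ)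
    (q : ι → ℝ) : MemLp (fun ω => c + ∑ j, q j * Y j ω) 2 μ :=
  (memLp_const c).add (memLp_finsetSum _ fun j _ => (hY j).const_mul (q j))

lemma covariance_sum_mul_right [IsFiniteMeasure μ] (hX : MemLp X 2 μ)
    (hY : ∀ j, MemLp (Y j) 2 μ) (q : ι → ℝ) :
    cov[X, fun ω => ∑ j, q j * Y j ω; μ] = ∑ j, q j * cov[X, Y j; μ] := by
  rw [covariance_fun_sum_right (fun j => (hY j).const_mul (q j)) hX]
  simp_rw [covariance_const_mul_right]

lemma covariance_const_add_sum_mul_right [IsProbabilityMeasure μ] (hX : MemLp X 2 μ)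
    (hY : ∀ j, MemLp (Y j) 2 μ) (c : ℝ) (q : ι → ℝ) :
    cov[X, fun ω => c + ∑ j, q j * Y j ω; μ] = ∑ j, q j * cov[X, Y j; μ] := by
  rw [covariance_const_add_right ((memLp_finsetSum _ fun j _ => (hY j).const_mul (q j)).integrable
    one_le_two), covariance_sum_mul_right hX hY]

lemma covariance_const_add_sum_mul_left [IsProbabilityMeasure μ] (hX : MemLp X 2 μ)
    (hY : ∀ j, MemLp (Y j) 2 μ) (c : ℝ) (q : ι → ℝ) :
    cov[fun ω => c + ∑ j, q j * Y j ω, X; μ] = ∑ j, q j * cov[Y j, X; μ] := by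
  simp_rw [covariance_comm _ X]
  exact covariance_const_add_sum_mul_right hX hY c q

end LinearCombination

section CovarianceMatrix

variable [IsProbabilityMeasure μ] {m n : ℕ} {B : Fin m → Ω → ℝ} {D : Fin n → Ω → ℝ}

lemma covariance_sum_mul_right_eq_cov_mulVec (hB : ∀ i, MemLp (B i) 2 μ)
    (hD : ∀ j, MemLp (D j) 2 μ) (v : Fin n → ℝ) (i : Fin m) :
    cov[B i, fun ω => ∑ j, v j * D j ω; μ] = (cov μ B D *ᵥ v) i := by
  rw [covariance_sum_mul_right (hB i) hD, mulVec, dotProduct]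
  simp_rw [cov_apply_eq_covariance_s12 (hB i) (hD _), mul_comm]

/-- If `Var(D) v = 0` then `Var(vᵀD) = vᵀ Var(D) v = 0`, so `vᵀD` is almost surely constant and
hence uncorrelated with every `Bᵢ`. -/
lemma cov_mulVec_eq_zero_of_cov_self_mulVec_eq_zero (hB : ∀ i, MemLp (B i) 2 μ)
    (hD : ∀ j, MemLp (D j) 2 μ) {v : Fin n → ℝ} (hv : cov μ D D *ᵥ v = 0) :
    cov μ B D *ᵥ v = 0 := by
  have hY : MemLp (fun ω => ∑ j, v j * D j ω) 2 μ :=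
    memLp_finsetSum _ fun j _ => (hD j).const_mul (v j)
  have hVarY : Var[fun ω => ∑ j, v j * D j ω; μ] = 0 := by
    have hcov : ∀ j, cov[fun ω => ∑ j, v j * D j ω, D j; μ] = 0 := fun j => by
      rw [covariance_comm, covariance_sum_mul_right_eq_cov_mulVec hD hD, hv, Pi.zero_apply]
    rw [← covariance_self hY.aemeasurable, covariance_sum_mul_right hY hD]
    simp [hcov]
  funext i
  rw [← covariance_sum_mul_right_eq_cov_mulVec hB hD]
  exact covariance_eq_zero_of_variance_eq_zero hY hVarY

lemma cov_mul_mul_cov_self_of_mul_mul_self (hB : ∀ i, MemLp (B i) 2 μ)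
    (hD : ∀ j, MemLp (D j) 2 μ) {W : Matrix (Fin n) (Fin n) ℝ}
    (hW : cov μ D D * W * cov μ D D = cov μ D D) :
    cov μ B D * W * cov μ D D = cov μ B D := by
  refine ext_iff_mulVec.2 fun x => ?_
  have hker : cov μ D D *ᵥ ((W * cov μ D D) *ᵥ x - x) = 0 := by
    rw [mulVec_sub, mulVec_mulVec, ← Matrix.mul_assoc, hW, sub_self]
  have := cov_mulVec_eq_zero_of_cov_self_mulVec_eq_zero hB hD hker
  rwa [mulVec_sub, mulVec_mulVec, ← Matrix.mul_assoc, sub_eq_zero] at this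

end CovarianceMatrix

section AdjustedExpectation

variable {m n : ℕ} {B : Fin m → Ω → ℝ} {D : Fin n → Ω → ℝ} (W : Matrix (Fin n) (Fin n) ℝ)

lemma adjExp_eq_const_add_sum (i : Fin m) :
    adjExp μ B D W i = fun ω => ((∫ ω', B i ω' ∂μ) -
      ∑ j, (cov μ B D * W) i j * ∫ ω', D j ω' ∂μ) + ∑ j, (cov μ B D * W) i j * D j ω := by
  funext ω
  simp only [adjExp, mul_sub, Finset.sum_sub_distrib]
  ring

variable [IsProbabilityMeasure μ]

lemma memLp_adjExp (hD : ∀ j, MemLp (D j) 2 μ) (i : Fin m) : MemLp (adjExp μ B D W i) 2 μ := by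
  rw [adjExp_eq_const_add_sum]
  exact memLp_const_add_sum_mul hD _ _

lemma integral_adjExp (hD : ∀ j, Integrable (D j) μ) (i : Fin m) :
    ∫ ω, adjExp μ B D W i ω ∂μ = ∫ ω, B i ω ∂μ := by
  have hDc : ∀ j, Integrable (fun ω => (cov μ B D * W) i j * (D j ω - ∫ ω', D j ω' ∂μ)) μ :=
    fun j => ((hD j).sub (integrable_const _)).const_mul _
  simp only [adjExp]
  rw [integral_add (integrable_const _) (integrable_finsetSum _ fun j _ => hDc j),
    integral_finsetSum _ fun j _ => hDc j]
  simp [integral_const_mul, integral_sub (hD _) (integrable_const _)]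

lemma covariance_sub_adjExp_eq_zero (hB : ∀ i, MemLp (B i) 2 μ) (hD : ∀ j, MemLp (D j) 2 μ)
    (hW : cov μ D D * W * cov μ D D = cov μ D D) (i : Fin m) (k : Fin n) :
    cov[fun ω => B i ω - adjExp μ B D W i ω, D k; μ] = 0 := by
  rw [covariance_fun_sub_left (hB i) (memLp_adjExp W hD i) (hD k), adjExp_eq_const_add_sum,
    covariance_const_add_sum_mul_left (hD k) hD, ← cov_apply_eq_covariance_s12 (hB i) (hD k)]
  have hCWV := congrFun₂ (cov_mul_mul_cov_self_of_mul_mul_self hB hD hW) i k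
  rw [Matrix.mul_apply] at hCWV
  simp_rw [← cov_apply_eq_covariance_s12 (hD _) (hD k), hCWV, sub_self]

end AdjustedExpectation

end

/-- the adjusted expectation `E_D(B)` is the affine function of `D` closest to
`B` in expected squared loss: for every matrix `M` and vector `a`,
`Σ_i E[(Bᵢ − (E_D(B))ᵢ)²] ≤ Σ_i E[(Bᵢ − aᵢ − Σ_j M_{ij}·Dⱼ)²]`. -/
theorem adjExp_is_best_affine [MeasurableSpace Ω] (μ : Measure Ω) [IsProbabilityMeasure μ]
    {m n : ℕ} (B : Fin m → Ω → ℝ) (D : Fin n → Ω → ℝ)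
    (hB : ∀ i, Measurable (B i) ∧ MemLp (B i) 2 μ)
    (hD : ∀ i, Measurable (D i) ∧ MemLp (D i) 2 μ)
    (W : Matrix (Fin n) (Fin n) ℝ) (hW : IsMoorePenrose (cov μ D D) W)
    (M : Matrix (Fin m) (Fin n) ℝ) (a : Fin m → ℝ) :
    (∑ i, ∫ ω, (B i ω - adjExp μ B D W i ω) ^ 2 ∂μ) ≤
      ∑ i, ∫ ω, (B i ω - a i - ∑ j, M i j * D j ω) ^ 2 ∂μ := by
  have hB₂ i := (hB i).2
  have hD₂ j := (hD j).2
  refine Finset.sum_le_sum fun i _ => ?_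
  let p := fun j => (cov μ B D * W) i j
  let c := (∫ ω, B i ω ∂μ) - ∑ j, p j * (∫ ω, D j ω ∂μ) - a i
  have hsplit : ∀ ω, B i ω - a i - ∑ j, M i j * D j ω =
      (B i ω - adjExp μ B D W i ω) + (c + ∑ j, (p j - M i j) * D j ω) := fun ω => by
    simp only [p, c, adjExp_eq_const_add_sum, sub_mul, Finset.sum_sub_distrib]
    ring
  have hR : MemLp (fun ω => B i ω - adjExp μ B D W i ω) 2 μ :=
    (hB₂ i).sub (memLp_adjExp W hD₂ i)
  simp_rw [hsplit]
  refine integral_sq_le_integral_add_sq hR (memLp_const_add_sum_mul hD₂ _ _) ?_ ?_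
  · rw [integral_sub ((hB₂ i).integrable one_le_two) ((memLp_adjExp W hD₂ i).integrable one_le_two),
      integral_adjExp W (fun j => (hD₂ j).integrable one_le_two), sub_self]
  · rw [covariance_const_add_sum_mul_right hR hD₂]
    simp [covariance_sub_adjExp_eq_zero W hB₂ hD₂ hW.1]
end
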